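/- Let p ∈ [2,∞] and q ∈ [1,∞] with 2/p + 2/q = 1. Assume β is integrable with expectation β̄ = Eβ ∈ ℝ^n, that the residue ρ(β̄) belongs to L^p(Ω,μ), and that K_q(Γ) < ∞. Then the trace of the covariance matrix of β satisfies Tr(Cov(β)) = E‖β − β̄‖₂² ≤ n · m² · K_q(Γ) · ‖ρ(β̄)‖²_{L^p(Ω)}. -/

import Mathlib

open MeasureTheory ProbabilityTheory ENNReal Matrix Filter

noncomputable section

/-- Removed from Mathlib since the original was written; restated with its old meaning. -/
theorem Matrix.isHermitian_transpose_mul_self {m n : Type*} [Fintype m]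
    (A : Matrix m n ℝ) : (Aᵀ * A).IsHermitian := by
  rw [← conjTranspose_eq_transpose_of_trivial]
  exact isHermitian_conjTranspose_mul_self A

/-- The smallest eigenvalue `s₁(A)` of the symmetric positive semidefinite matrix `AᵀA`. -/
def s1 {m n : ℕ} (A : Matrix (Fin m) (Fin n) ℝ) : ℝ :=
  ⨅ i, (Matrix.isHermitian_transpose_mul_self A).eigenvalues i

/-- Euclidean norm on `ℝ^n`. -/
def enorm2 {n : ℕ} (v : Fin n → ℝ) : ℝ := Real.sqrt (∑ j, v j ^ 2)

/-- The matrix `Γ(x)` with entries `Γ(x)_{ij} = γ_j(x⁽ⁱ⁾)`. -/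
def dmat {Ω : Type*} {n m : ℕ} (γ : Fin n → Ω → ℝ) (x : Fin m → Ω) :
    Matrix (Fin m) (Fin n) ℝ := Matrix.of fun i j => γ j (x i)

/-- The matrix `R(x) = (Γ(x)ᵀΓ(x))⁻¹Γ(x)ᵀ`. -/
def Rmat {Ω : Type*} {n m : ℕ} (γ : Fin n → Ω → ℝ) (x : Fin m → Ω) :
    Matrix (Fin n) (Fin m) ℝ := ((dmat γ x)ᵀ * dmat γ x)⁻¹ * (dmat γ x)ᵀ

/-- `β(x) = R(x) F(x)` where `F(x)_i = f(x⁽ⁱ⁾)`. -/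
def betaFn {Ω : Type*} {n m : ℕ} (γ : Fin n → Ω → ℝ) (f : Ω → ℝ) (x : Fin m → Ω) :
    Fin n → ℝ := Rmat γ x *ᵥ fun i => f (x i)

/-- The residue `ρ(a)(ω) = f(ω) - ∑ j a_j γ_j(ω)`. -/
def resid {Ω : Type*} {n : ℕ} (γ : Fin n → Ω → ℝ) (f : Ω → ℝ) (a : Fin n → ℝ) : Ω → ℝ :=
  fun ω => f ω - ∑ j, a j * γ j ω

/-! On every sample with `Γᵀ Γ` invertible, `R Γ = 1` gives `β - β̄ = R ρ(β̄)(X)`. The vector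
`u = R v` solves the normal equations `Γᵀ Γ u = Γᵀ v`, so `Γ u` is the orthogonal projection of
`v` and `s₁ ‖u‖² ≤ ‖Γ u‖² ≤ ‖v‖²`; hence `‖β - β̄‖² ≤ s₁⁻¹ ∑ᵢ ρ(X⁽ⁱ⁾)²`. Hölder's inequality
with the conjugate exponents `q/2, p/2`, and Minkowski's inequality for the `m` identically
distributed terms `ρ(X⁽ⁱ⁾)²`, bound the expectation by `m K_q(Γ) ‖ρ‖²_{L^p} ≤ n m² K_q(Γ) ‖ρ‖²_{L^p}`.
-/

namespace Matrix

variable {k l : Type*} [Fintype k] [Fintype l]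

open scoped MatrixOrder in
lemma IsHermitian.mul_dotProduct_self_le_dotProduct_mulVec [DecidableEq l] {B : Matrix l l ℝ}
    (hB : B.IsHermitian) {c : ℝ} (hc : ∀ i, c ≤ hB.eigenvalues i) (u : l → ℝ) :
    c * (u ⬝ᵥ u) ≤ u ⬝ᵥ (B *ᵥ u) := by
  have hle : algebraMap ℝ _ c ≤ B := by
    rw [algebraMap_le_iff_le_spectrum hB.isSelfAdjoint, hB.spectrum_real_eq_range_eigenvalues]
    rintro _ ⟨i, rfl⟩
    exact hc i
  simpa [sub_mulVec, dotProduct_sub, Algebra.algebraMap_eq_smul_one, smul_mulVec] using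
    (le_iff.mp hle).dotProduct_mulVec_nonneg u

lemma dotProduct_mulVec_transpose_mul_self (A : Matrix k l ℝ) (u : l → ℝ) :
    u ⬝ᵥ ((Aᵀ * A) *ᵥ u) = (A *ᵥ u) ⬝ᵥ (A *ᵥ u) := by
  rw [← mulVec_mulVec, dotProduct_mulVec, vecMul_transpose]

/-- `A u` is the orthogonal projection of `v` onto the range of `A`: `‖A u‖² = ⟪A u, v⟫`. -/
lemma dotProduct_self_mulVec_le_of_normal_eq {A : Matrix k l ℝ} {u : l → ℝ} {v : k → ℝ}
    (hu : (Aᵀ * A) *ᵥ u = Aᵀ *ᵥ v) : (A *ᵥ u) ⬝ᵥ (A *ᵥ u) ≤ v ⬝ᵥ v := by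
  set w := A *ᵥ u
  have hw : w ⬝ᵥ w = w ⬝ᵥ v := by
    rw [← dotProduct_mulVec_transpose_mul_self, hu, dotProduct_mulVec, vecMul_transpose]
  have : 0 ≤ (v - w) ⬝ᵥ (v - w) := dotProduct_self_star_nonneg (v - w)
  simp only [sub_dotProduct, dotProduct_sub, dotProduct_comm v w] at this
  linarith

end Matrix

lemma s1_le_eigenvalues {m n : ℕ} (A : Matrix (Fin m) (Fin n) ℝ) (i : Fin n) :
    s1 A ≤ (Matrix.isHermitian_transpose_mul_self A).eigenvalues i :=
  ciInf_le (Set.finite_range _).bddBelow i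

lemma s1_pos {m n : ℕ} (hn : 0 < n) {A : Matrix (Fin m) (Fin n) ℝ}
    (hA : IsUnit (Aᵀ * A).det) : 0 < s1 A := by
  have : Nonempty (Fin n) := ⟨⟨0, hn⟩⟩
  have hpos : (Aᵀ * A).PosDef := by
    rw [← conjTranspose_eq_transpose_of_trivial] at hA ⊢
    exact (posSemidef_conjTranspose_mul_self A).posDef_iff_isUnit.mpr
      ((isUnit_iff_isUnit_det _).mpr hA)
  obtain ⟨i, hi⟩ := exists_eq_ciInf_of_finite
    (f := (Matrix.isHermitian_transpose_mul_self A).eigenvalues)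
  rw [s1, ← hi]
  exact hpos.eigenvalues_pos i

lemma s1_mul_dotProduct_self_le {m n : ℕ} (A : Matrix (Fin m) (Fin n) ℝ) (u : Fin n → ℝ) :
    s1 A * (u ⬝ᵥ u) ≤ (A *ᵥ u) ⬝ᵥ (A *ᵥ u) := by
  rw [← dotProduct_mulVec_transpose_mul_self]
  exact (isHermitian_transpose_mul_self A).mul_dotProduct_self_le_dotProduct_mulVec
    (s1_le_eigenvalues A) u

lemma dotProduct_self_leastSquares_le {m n : ℕ} (hn : 0 < n) {A : Matrix (Fin m) (Fin n) ℝ}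
    (hA : IsUnit (Aᵀ * A).det) (v : Fin m → ℝ) :
    (((Aᵀ * A)⁻¹ * Aᵀ) *ᵥ v) ⬝ᵥ (((Aᵀ * A)⁻¹ * Aᵀ) *ᵥ v) ≤ (s1 A)⁻¹ * (v ⬝ᵥ v) := by
  have hnormal : (Aᵀ * A) *ᵥ (((Aᵀ * A)⁻¹ * Aᵀ) *ᵥ v) = Aᵀ *ᵥ v := by
    rw [mulVec_mulVec, ← Matrix.mul_assoc, mul_nonsing_inv _ hA, Matrix.one_mul]
  rw [le_inv_mul_iff₀ (s1_pos hn hA)]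
  exact (s1_mul_dotProduct_self_le A _).trans (dotProduct_self_mulVec_le_of_normal_eq hnormal)

section Measurability

variable {Ω : Type*} [MeasurableSpace Ω] {n m : ℕ} {γ : Fin n → Ω → ℝ} {f : Ω → ℝ}

lemma Matrix.measurable_inv_apply {α l : Type*} [MeasurableSpace α] [Fintype l] [DecidableEq l]
    {M : α → Matrix l l ℝ} (hM : ∀ i j, Measurable fun a => M a i j) (i j : l) :
    Measurable fun a => (M a)⁻¹ i j := by
  have hM' : Measurable fun a i j => M a i j :=
    measurable_pi_lambda _ fun i => measurable_pi_lambda _ fun j => hM i j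
  have hdet : Continuous fun N : l → l → ℝ => (of N).det := continuous_id.matrix_det
  have hadj : Continuous fun N : l → l → ℝ => (of N).adjugate i j :=
    (continuous_apply_apply i j).comp continuous_id.matrix_adjugate
  simp only [inv_def, smul_apply, Ring.inverse_eq_inv', smul_eq_mul]
  exact (hdet.measurable.comp hM').inv.mul (hadj.measurable.comp hM')

lemma measurable_dmat_apply (hγ : ∀ j, Measurable (γ j)) (i : Fin m) (j : Fin n) :
    Measurable fun x : Fin m → Ω => dmat γ x i j :=
  (hγ j).comp (measurable_pi_apply i)

lemma measurable_betaFn_apply (hγ : ∀ j, Measurable (γ j)) (hf : Measurable f) (j : Fin n) :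
    Measurable fun x : Fin m → Ω => betaFn γ f x j := by
  have hB : ∀ k l, Measurable fun x : Fin m → Ω => ((dmat γ x)ᵀ * dmat γ x) k l := fun k l => by
    simp only [mul_apply, transpose_apply]
    exact Finset.measurable_sum _ fun i _ =>
      (measurable_dmat_apply hγ i k).mul (measurable_dmat_apply hγ i l)
  simp only [betaFn, Rmat, mulVec, dotProduct, mul_apply, transpose_apply]
  exact Finset.measurable_sum _ fun i _ => (Finset.measurable_sum _ fun k _ =>
    (Matrix.measurable_inv_apply hB j k).mul (measurable_dmat_apply hγ i k)).mul
      (hf.comp (measurable_pi_apply i))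

lemma measurable_resid (hγ : ∀ j, Measurable (γ j)) (hf : Measurable f) (a : Fin n → ℝ) :
    Measurable (resid γ f a) :=
  hf.sub (Finset.measurable_sum _ fun j _ => (hγ j).const_mul _)

end Measurability

section LpBounds

variable {α : Type*} [MeasurableSpace α]

lemma eLpNorm_sq_div_two (μ : Measure α) (g : α → ℝ) (p : ℝ≥0∞) :
    eLpNorm (fun x => g x ^ 2) (p / 2) μ = eLpNorm g p μ ^ 2 := by
  have h := eLpNorm_norm_rpow g (p := p / 2) (μ := μ) (q := 2) two_pos
  simp only [Real.norm_eq_abs, Real.rpow_two, sq_abs, ENNReal.ofReal_ofNat] at h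
  rw [h, ENNReal.div_mul_cancel two_ne_zero ENNReal.ofNat_ne_top, ENNReal.rpow_two]

lemma eLpNorm_sum_comp_eval_le {ι : Type*} [Fintype ι] (μ : Measure α) [IsProbabilityMeasure μ]
    {h : α → ℝ} (hh : AEStronglyMeasurable h μ) {p : ℝ≥0∞} (hp : 1 ≤ p) :
    eLpNorm (fun x : ι → α => ∑ i, h (x i)) p (Measure.pi fun _ => μ)
      ≤ Fintype.card ι * eLpNorm h p μ := by
  have hcomp (i : ι) := hh.comp_measurePreserving (measurePreserving_eval (fun _ => μ) i)
  have heval (i : ι) : eLpNorm (fun x : ι → α => h (x i)) p (Measure.pi fun _ => μ)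
      = eLpNorm h p μ := eLpNorm_comp_measurePreserving hh (measurePreserving_eval _ i)
  calc eLpNorm (fun x : ι → α => ∑ i, h (x i)) p (Measure.pi fun _ => μ)
      = eLpNorm (∑ i, fun x : ι → α => h (x i)) p (Measure.pi fun _ => μ) := by
        simp only [Finset.sum_fn]
    _ ≤ ∑ i, eLpNorm (fun x : ι → α => h (x i)) p (Measure.pi fun _ => μ) :=
        eLpNorm_sum_le (fun i _ => hcomp i) hp
    _ = Fintype.card ι * eLpNorm h p μ := by
        simp [heval]

/-- `φ` need not be measurable: Hölder's inequality is applied to the measurable `g / ψ`,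
which is dominated by `|φ|`. -/
lemma lintegral_ofReal_le_eLpNorm_mul_eLpNorm {ν : Measure α} {p q : ℝ≥0∞}
    [p.HolderTriple q 1] {g ψ : α → ℝ} (φ : α → ℝ) (hg : Measurable g) (hψ : Measurable ψ)
    (hg0 : 0 ≤ g) (hψ0 : 0 ≤ ψ) (h : ∀ᵐ x ∂ν, g x ≤ φ x * ψ x) :
    ∫⁻ x, ENNReal.ofReal (g x) ∂ν ≤ eLpNorm φ p ν * eLpNorm ψ q ν := by
  have hdom : ∀ᵐ x ∂ν, g x = g x / ψ x * ψ x ∧ ‖g x / ψ x‖ ≤ ‖φ x‖ := by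
    filter_upwards [h] with x hx
    rcases (hψ0 x).eq_or_lt with hψx | hψx
    · have : g x = 0 := le_antisymm (by simpa [← hψx] using hx) (hg0 x)
      simp [this]
    · refine ⟨(div_mul_cancel₀ _ hψx.ne').symm, ?_⟩
      rw [Real.norm_of_nonneg (div_nonneg (hg0 x) hψx.le)]
      exact ((div_le_iff₀ hψx).2 hx).trans (le_abs_self _)
  calc ∫⁻ x, ENNReal.ofReal (g x) ∂ν = eLpNorm ((fun x => g x / ψ x) • ψ) 1 ν := by
        rw [eLpNorm_one_eq_lintegral_enorm]
        refine lintegral_congr_ae ?_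
        filter_upwards [hdom] with x hx
        rw [Pi.smul_apply', smul_eq_mul, ← hx.1, Real.enorm_of_nonneg (hg0 x)]
    _ ≤ eLpNorm (fun x => g x / ψ x) p ν * eLpNorm ψ q ν :=
        eLpNorm_smul_le_mul_eLpNorm hψ.aestronglyMeasurable (hg.div hψ).aestronglyMeasurable
    _ ≤ eLpNorm φ p ν * eLpNorm ψ q ν := by
        gcongr 1
        exact eLpNorm_mono_ae (hdom.mono fun x hx => hx.2)

end LpBounds

section LeastSquaresEstimator

variable {Ω : Type*} {n m : ℕ} (γ : Fin n → Ω → ℝ) (f : Ω → ℝ) {x : Fin m → Ω}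

lemma betaFn_sub_eq_Rmat_mulVec_resid (hx : IsUnit ((dmat γ x)ᵀ * dmat γ x).det)
    (a : Fin n → ℝ) : betaFn γ f x - a = Rmat γ x *ᵥ fun i => resid γ f a (x i) := by
  have hF : (fun i => f (x i)) = dmat γ x *ᵥ a + fun i => resid γ f a (x i) := by
    funext i
    simp [mulVec, dotProduct, dmat, resid, mul_comm]
  have hRΓ : Rmat γ x * dmat γ x = 1 := by
    rw [Rmat, Matrix.mul_assoc, nonsing_inv_mul _ hx]
  rw [betaFn, hF, mulVec_add, mulVec_mulVec, hRΓ, one_mulVec, add_sub_cancel_left]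

lemma sum_sq_betaFn_sub_le (hn : 0 < n) (hx : IsUnit ((dmat γ x)ᵀ * dmat γ x).det)
    (a : Fin n → ℝ) :
    ∑ j, (betaFn γ f x - a) j ^ 2 ≤ (s1 (dmat γ x))⁻¹ * ∑ i, resid γ f a (x i) ^ 2 := by
  have h := dotProduct_self_leastSquares_le hn hx fun i => resid γ f a (x i)
  rw [← Rmat, ← betaFn_sub_eq_Rmat_mulVec_resid γ f hx] at h
  simpa only [dotProduct, sq] using h

end LeastSquaresEstimator

theorem stmt4_general {Ω : Type*} [MeasurableSpace Ω] (μ : Measure Ω) [IsProbabilityMeasure μ]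
    (n m : ℕ) (hn : 1 ≤ n)
    (γ : Fin n → Ω → ℝ) (hγ : ∀ j, Measurable (γ j))
    (f : Ω → ℝ) (hf : Measurable f)
    (hinv : ∀ᵐ x ∂(Measure.pi fun _ : Fin m => μ), IsUnit ((dmat γ x)ᵀ * dmat γ x).det)
    (βbar : Fin n → ℝ)
    (p q : ℝ≥0∞) (hp : 2 ≤ p) (hpq : 2 / p + 2 / q = 1) :
    ∫⁻ x, ENNReal.ofReal (enorm2 (betaFn γ f x - βbar)) ^ 2
        ∂(Measure.pi fun _ : Fin m => μ)
      ≤ n * m ^ 2 *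
        eLpNorm (fun x : Fin m → Ω => (s1 (dmat γ x))⁻¹) (q / 2)
          (Measure.pi fun _ : Fin m => μ) *
        eLpNorm (resid γ f βbar) p μ ^ 2 := by
  set ν := Measure.pi fun _ : Fin m => μ
  have : (q / 2).HolderTriple (p / 2) 1 := ⟨by
    rw [ENNReal.inv_div (by simp) (by simp), ENNReal.inv_div (by simp) (by simp), add_comm, hpq,
      inv_one]⟩
  have hresid := measurable_resid hγ hf βbar
  have hp2 : 1 ≤ p / 2 := by rwa [ENNReal.le_div_iff_mul_le (by simp) (by simp), one_mul]
  have hψ : eLpNorm (fun x : Fin m → Ω => ∑ i, resid γ f βbar (x i) ^ 2) (p / 2) ν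
      ≤ m * eLpNorm (resid γ f βbar) p μ ^ 2 := by
    rw [← eLpNorm_sq_div_two]
    simpa using eLpNorm_sum_comp_eval_le (ι := Fin m) μ
      (hresid.pow_const 2).aestronglyMeasurable hp2
  have hm : (m : ℝ≥0∞) ≤ n * m ^ 2 := by
    exact_mod_cast (Nat.le_self_pow two_ne_zero m).trans (Nat.le_mul_of_pos_left _ hn)
  calc ∫⁻ x, ENNReal.ofReal (enorm2 (betaFn γ f x - βbar)) ^ 2 ∂ν
      = ∫⁻ x, ENNReal.ofReal (∑ j, (betaFn γ f x - βbar) j ^ 2) ∂ν := by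
        simp only [enorm2, ← ENNReal.ofReal_pow (Real.sqrt_nonneg _),
          Real.sq_sqrt (Finset.sum_nonneg fun _ _ => sq_nonneg _)]
    _ ≤ eLpNorm (fun x : Fin m → Ω => (s1 (dmat γ x))⁻¹) (q / 2) ν *
          eLpNorm (fun x : Fin m → Ω => ∑ i, resid γ f βbar (x i) ^ 2) (p / 2) ν :=
        lintegral_ofReal_le_eLpNorm_mul_eLpNorm _
          (Finset.measurable_sum _ fun j _ =>
            ((measurable_betaFn_apply hγ hf j).sub_const _).pow_const 2)
          (Finset.measurable_sum _ fun i _ => (hresid.comp (measurable_pi_apply i)).pow_const 2)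
          (fun _ => Finset.sum_nonneg fun _ _ => sq_nonneg _)
          (fun _ => Finset.sum_nonneg fun _ _ => sq_nonneg _)
          (hinv.mono fun x hx => sum_sq_betaFn_sub_le γ f hn hx βbar)
    _ ≤ eLpNorm (fun x : Fin m → Ω => (s1 (dmat γ x))⁻¹) (q / 2) ν *
          (n * m ^ 2 * eLpNorm (resid γ f βbar) p μ ^ 2) := by
        grw [hψ, hm]
    _ = _ := by ring

/-- Proposition 2, variance bound: for `p ∈ [2,∞]`, `2/p + 2/q = 1`,
if `β` is integrable with expectation `β̄ = Eβ`, the residue `ρ(β̄) ∈ L^p(Ω,μ)` and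
`K_q(Γ) < ∞`, then `Tr(Cov(β)) = E‖β - β̄‖₂² ≤ n ⬝ m² ⬝ K_q(Γ) ⬝ ‖ρ(β̄)‖²_{L^p(Ω)}`. -/
theorem stmt4 {Ω : Type*} [MeasurableSpace Ω] (μ : Measure Ω) [IsProbabilityMeasure μ]
    (n m : ℕ) (hn : 1 ≤ n) (hm : 1 ≤ m)
    (γ : Fin n → Ω → ℝ) (hγ : ∀ j, Measurable (γ j))
    (f : Ω → ℝ) (hf : Measurable f)
    (hinv : ∀ᵐ x ∂(Measure.pi fun _ : Fin m => μ), IsUnit ((dmat γ x)ᵀ * dmat γ x).det)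
    (hint : ∀ j, Integrable (fun x : Fin m → Ω => betaFn γ f x j)
      (Measure.pi fun _ : Fin m => μ))
    (βbar : Fin n → ℝ)
    (hβbar : βbar = fun j => ∫ x, betaFn γ f x j ∂(Measure.pi fun _ : Fin m => μ))
    (p q : ℝ≥0∞) (hp : 2 ≤ p) (hq : 1 ≤ q) (hpq : 2 / p + 2 / q = 1)
    (hρ : MemLp (resid γ f βbar) p μ)
    (hK : eLpNorm (fun x : Fin m → Ω => (s1 (dmat γ x))⁻¹) (q / 2)
        (Measure.pi fun _ : Fin m => μ) < ⊤) :
    ∫⁻ x, ENNReal.ofReal (enorm2 (betaFn γ f x - βbar)) ^ 2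
        ∂(Measure.pi fun _ : Fin m => μ)
      ≤ n * m ^ 2 *
        eLpNorm (fun x : Fin m → Ω => (s1 (dmat γ x))⁻¹) (q / 2)
          (Measure.pi fun _ : Fin m => μ) *
        eLpNorm (resid γ f βbar) p μ ^ 2 :=
  stmt4_general μ n m hn γ hγ f hf hinv βbar p q hp hpq
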